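/- Let f_i : ℝ^d → ℝ (i = 1, …, n, n ≥ 2) be convex and differentiable with L_i-Lipschitz continuous gradient, L_max = max_i L_i, and f = (1/n) Σ_{i=1}^n f_i. Fix x, x̃, x* ∈ ℝ^d, let I be a subset of {1, …, n} of cardinality b (1 ≤ b ≤ n) chosen uniformly at random, and set ∇f̂(x) = (1/b) Σ_{i∈I} (∇f_i(x) − ∇f_i(x̃)) + ∇f(x̃). Then E‖∇f̂(x) − ∇f(x)‖² ≤ (4 L_max (n − b)/(b(n − 1))) · (D_f(x, x*) + D_f(x̃, x*)), where D_f(z, x*) = f(z) − f(x*) − ⟨∇f(x*), z − x*⟩. -/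

import Mathlib

/-!
With `v i = ∇f_i(x) - ∇f_i(x̃)`, the error `∇f̂(x) - ∇f(x)` is the deviation of the mean of a
uniform `b`-sample of the `v i` from their full mean. Sampling without replacement has variance
`(n - b) / (b (n - 1))` times the population variance `(1/n) ∑ ‖v i - v̄‖²`, which is at most
`(1/n) ∑ ‖v i‖²`. Splitting `v i` through `∇f_i(x*)` and using co-coercivity of smooth convex
functions, `‖∇g z - ∇g w‖² ≤ 2 L D_g(z, w)`, bounds `‖v i‖²` by `4 L_max` times the sum of the two
Bregman divergences of `f_i`, and these average to those of `f`.
-/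

open scoped RealInnerProductSpace

open Finset

section SmoothConvex

variable {F : Type*} [NormedAddCommGroup F] [InnerProductSpace ℝ F]

def bregmanDiv (g : F → ℝ) (g' : F → F) (z w : F) : ℝ := g z - g w - ⟪g' w, z - w⟫

lemma bregmanDiv_add_bregmanDiv (g : F → ℝ) (g' : F → F) (u z w : F) :
    bregmanDiv g g' u z + bregmanDiv g g' z w
      = bregmanDiv g g' u w - ⟪g' z - g' w, u - z⟫ := by
  have hsplit : u - w = (u - z) + (z - w) := by abel
  simp only [bregmanDiv, hsplit, inner_add_right, inner_sub_left]
  ring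

lemma bregmanDiv_mul_sum {ι : Type*} (c : ℝ) (s : Finset ι) (g : ι → F → ℝ) (g' : ι → F → F)
    (z w : F) :
    bregmanDiv (fun y => c * ∑ i ∈ s, g i y) (fun y => c • ∑ i ∈ s, g' i y) z w
      = c * ∑ i ∈ s, bregmanDiv (g i) (g' i) z w := by
  simp only [bregmanDiv, real_inner_smul_left, sum_inner, sum_sub_distrib]
  ring

variable [CompleteSpace F]

lemma HasGradientAt.hasDerivAt_comp_add_smul {g : F → ℝ} {g' x v : F} {t : ℝ}
    (hg : HasGradientAt g g' (x + t • v)) :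
    HasDerivAt (fun s : ℝ => g (x + s • v)) ⟪g', v⟫ t := by
  have hline : HasDerivAt (fun s : ℝ => x + s • v) v t := by
    simpa using ((hasDerivAt_id t).smul_const v).const_add x
  have hcomp := (hasGradientAt_iff_hasFDerivAt.mp hg).comp_hasDerivAt t hline
  simp only [InnerProductSpace.toDual_apply_apply] at hcomp
  exact hcomp

lemma ConvexOn.bregmanDiv_nonneg {g : F → ℝ} {g' : F → F} (hcv : ConvexOn ℝ Set.univ g)
    {w : F} (hg : HasGradientAt g (g' w) w) (z : F) : 0 ≤ bregmanDiv g g' z w := by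
  have hline : ConvexOn ℝ Set.univ (fun t : ℝ => g (w + t • (z - w))) := by
    have hcomp : (fun t : ℝ => g (w + t • (z - w))) = g ∘ AffineMap.lineMap w z := by
      ext t
      simp [AffineMap.lineMap_apply, add_comm]
    simpa [hcomp] using hcv.comp_affineMap (AffineMap.lineMap w z)
  have hslope := hline.le_slope_of_hasDerivAt (Set.mem_univ 0) (Set.mem_univ 1) zero_lt_one
    (HasGradientAt.hasDerivAt_comp_add_smul (t := 0) (v := z - w) (by simpa using hg))
  simp only [slope_def_field, one_smul, add_sub_cancel, zero_smul, add_zero, sub_zero,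
    div_one] at hslope
  unfold bregmanDiv
  linarith

lemma bregmanDiv_le_of_lipschitz_gradient {g : F → ℝ} {g' : F → F}
    (hg : ∀ u, HasGradientAt g (g' u) u) {Lc : ℝ} (hLip : ∀ u v, ‖g' u - g' v‖ ≤ Lc * ‖u - v‖)
    (z w : F) : bregmanDiv g g' z w ≤ Lc / 2 * ‖z - w‖ ^ 2 := by
  set v := z - w
  set ψ : ℝ → ℝ := fun t => g (w + t • v) - t * ⟪g' w, v⟫ - Lc / 2 * t ^ 2 * ‖v‖ ^ 2
  have hψ : ∀ t, HasDerivAt ψ (⟪g' (w + t • v), v⟫ - ⟪g' w, v⟫ - Lc * t * ‖v‖ ^ 2) t := by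
    intro t
    refine (((hg (w + t • v)).hasDerivAt_comp_add_smul.sub
      ((hasDerivAt_id t).mul_const ⟪g' w, v⟫)).sub
      (((hasDerivAt_pow 2 t).const_mul (Lc / 2)).mul_const (‖v‖ ^ 2))).congr_deriv ?_
    simp only [Nat.cast_ofNat, Nat.add_one_sub_one, pow_one]
    ring
  have hψ_anti : AntitoneOn ψ (Set.Icc 0 1) := by
    refine antitoneOn_of_hasDerivWithinAt_nonpos (convex_Icc 0 1)
      (fun t _ => (hψ t).continuousAt.continuousWithinAt)
      (fun t _ => (hψ t).hasDerivWithinAt) fun t ht => ?_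
    rw [interior_Icc] at ht
    have hLip_t : ⟪g' (w + t • v) - g' w, v⟫ ≤ Lc * t * ‖v‖ ^ 2 :=
      calc ⟪g' (w + t • v) - g' w, v⟫ ≤ ‖g' (w + t • v) - g' w‖ * ‖v‖ := real_inner_le_norm _ _
        _ ≤ Lc * ‖(w + t • v) - w‖ * ‖v‖ := by gcongr; exact hLip _ _
        _ = Lc * t * ‖v‖ ^ 2 := by
          rw [add_sub_cancel_left, norm_smul, Real.norm_of_nonneg ht.1.le]; ring
    rw [inner_sub_left] at hLip_t
    linarith
  have hψ0 : ψ 0 = g w := by simp [ψ]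
  have hψ1 : ψ 1 = g z - ⟪g' w, z - w⟫ - Lc / 2 * ‖z - w‖ ^ 2 := by simp [ψ, v]
  have h01 := hψ_anti (by simp) (by simp) zero_le_one
  rw [hψ0, hψ1] at h01
  unfold bregmanDiv
  linarith

lemma ConvexOn.sq_norm_sub_le_two_mul_bregmanDiv {g : F → ℝ} {g' : F → F}
    (hcv : ConvexOn ℝ Set.univ g) (hg : ∀ u, HasGradientAt g (g' u) u) {Lc : ℝ}
    (hLip : ∀ u v, ‖g' u - g' v‖ ≤ Lc * ‖u - v‖) (z w : F) :
    ‖g' z - g' w‖ ^ 2 ≤ 2 * Lc * bregmanDiv g g' z w := by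
  rcases le_or_gt Lc 0 with hLc | hLc
  · have hgrad : ‖g' z - g' w‖ = 0 :=
      le_antisymm ((hLip z w).trans (mul_nonpos_of_nonpos_of_nonneg hLc (norm_nonneg _)))
        (norm_nonneg _)
    have hD : bregmanDiv g g' z w ≤ 0 :=
      (bregmanDiv_le_of_lipschitz_gradient hg hLip z w).trans
        (mul_nonpos_of_nonpos_of_nonneg (by linarith) (sq_nonneg _))
    rw [hgrad]
    nlinarith
  · -- compare with the gradient step `u` from `z`, using convexity at `w` and smoothness at `z`
    set Δ := g' z - g' w
    set u := z - Lc⁻¹ • Δ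
    have hstep : u - z = -(Lc⁻¹ • Δ) := by simp [u]
    have hconvex := hcv.bregmanDiv_nonneg (hg w) u
    have hsmooth := bregmanDiv_le_of_lipschitz_gradient hg hLip u z
    have hthree := bregmanDiv_add_bregmanDiv g g' u z w
    rw [hstep, norm_neg, norm_smul, Real.norm_of_nonneg (inv_nonneg.mpr hLc.le)] at hsmooth
    rw [hstep, inner_neg_right, real_inner_smul_right, real_inner_self_eq_norm_sq] at hthree
    have key : Lc⁻¹ / 2 * ‖Δ‖ ^ 2 ≤ bregmanDiv g g' z w := by
      have : Lc / 2 * (Lc⁻¹ * ‖Δ‖) ^ 2 = Lc⁻¹ / 2 * ‖Δ‖ ^ 2 := by field_simp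
      linarith
    calc ‖Δ‖ ^ 2 = 2 * Lc * (Lc⁻¹ / 2 * ‖Δ‖ ^ 2) := by field_simp
      _ ≤ 2 * Lc * bregmanDiv g g' z w := by gcongr

lemma ConvexOn.sq_norm_sub_le_four_mul_bregmanDiv_add {g : F → ℝ} {g' : F → F}
    (hcv : ConvexOn ℝ Set.univ g) (hg : ∀ u, HasGradientAt g (g' u) u) {Lc : ℝ}
    (hLip : ∀ u v, ‖g' u - g' v‖ ≤ Lc * ‖u - v‖) (x y z : F) :
    ‖g' x - g' y‖ ^ 2 ≤ 4 * Lc * (bregmanDiv g g' x z + bregmanDiv g g' y z) := by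
  have hpar := parallelogram_law_with_norm ℝ (g' x - g' z) (g' y - g' z)
  have hxz := hcv.sq_norm_sub_le_two_mul_bregmanDiv hg hLip x z
  have hyz := hcv.sq_norm_sub_le_two_mul_bregmanDiv hg hLip y z
  rw [sub_sub_sub_cancel_right] at hpar
  nlinarith [sq_nonneg ‖g' x - g' z + (g' y - g' z)‖]

end SmoothConvex

lemma Nat.choose_sub_two_mul_mul {n b : ℕ} (hn : 2 ≤ n) (hb : 1 ≤ b) :
    (n - 2).choose (b - 1) * (n * (n - 1)) = n.choose b * (b * (n - b)) := by
  obtain ⟨m, rfl⟩ := Nat.exists_eq_add_of_le' hn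
  obtain ⟨k, rfl⟩ := Nat.exists_eq_add_of_le' hb
  rw [show m + 2 - (k + 1) = m + 1 - k by omega, Nat.add_sub_cancel, Nat.add_sub_cancel,
    show m + 2 - 1 = m + 1 by omega]
  calc m.choose k * ((m + 2) * (m + 1)) = (m + 2) * (m.choose k * (m + 1)) := by ring
    _ = (m + 2) * (m + 1).choose k * (m + 1 - k) := by rw [Nat.choose_mul_succ_eq]; ring
    _ = (m + 2).choose (k + 1) * ((k + 1) * (m + 1 - k)) := by
      rw [Nat.add_one_mul_choose_eq]; ring

section Sampling

variable {ι E : Type*} [Fintype ι] [NormedAddCommGroup E] [InnerProductSpace ℝ E]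

lemma sum_norm_sub_mean_sq_le (v : ι → E) :
    ∑ i, ‖v i - (Fintype.card ι : ℝ)⁻¹ • ∑ j, v j‖ ^ 2 ≤ ∑ i, ‖v i‖ ^ 2 := by
  set n : ℝ := ((Fintype.card ι : ℕ) : ℝ)
  have hexpand : ∑ i, ‖v i - n⁻¹ • ∑ j, v j‖ ^ 2 = ∑ i, ‖v i‖ ^ 2 - n⁻¹ * ‖∑ j, v j‖ ^ 2 := by
    have hnorm : ‖n‖ = n := Real.norm_natCast _
    simp only [norm_sub_sq_real, sum_add_distrib, sum_sub_distrib, ← mul_sum, ← sum_inner,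
      real_inner_smul_right, real_inner_self_eq_norm_sq, norm_smul, sum_const, card_univ,
      nsmul_eq_mul, norm_inv, hnorm]
    rcases eq_or_ne n 0 with hn | hn
    · simp [hn]
    · field_simp
      ring
  have : 0 ≤ n⁻¹ * ‖∑ j, v j‖ ^ 2 := by positivity
  linarith

variable [DecidableEq ι]

lemma card_filter_powersetCard_mem_notMem {b : ℕ} (hb : 1 ≤ b) {i j : ι} (hij : i ≠ j) :
    #{I ∈ powersetCard b (univ : Finset ι) | i ∈ I ∧ j ∉ I}
      = (Fintype.card ι - 2).choose (b - 1) := by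
  have hfilter : {I ∈ powersetCard b (univ : Finset ι) | i ∈ I ∧ j ∉ I}
      = {I ∈ powersetCard b (univ.erase j) | {i} ⊆ I} := by
    ext I
    simp only [mem_filter, mem_powersetCard, subset_univ, true_and, singleton_subset_iff,
      subset_erase]
    tauto
  rw [hfilter, card_filter_powersetCard_subset _ _ _ (by simpa using hij) (by simpa using hb)]
  simp [card_erase_of_mem, Nat.sub_sub]

lemma sum_powersetCard_norm_sum_sq {h : ι → E} (hsum : ∑ i, h i = 0) {b : ℕ} (hb : 1 ≤ b) :
    ∑ I ∈ powersetCard b (univ : Finset ι), ‖∑ i ∈ I, h i‖ ^ 2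
      = (Fintype.card ι - 2).choose (b - 1) * ∑ i, ‖h i‖ ^ 2 := by
  set c : ℝ := (((Fintype.card ι - 2).choose (b - 1) : ℕ) : ℝ)
  -- `∑_{i ∈ I} h i = - ∑_{j ∉ I} h j`, and a pair `i ≠ j` is split by exactly `c` of the sets `I`
  have hsplit : ∀ I : Finset ι, ‖∑ i ∈ I, h i‖ ^ 2
      = -∑ i, ∑ j, if i ∈ I ∧ j ∉ I then ⟪h i, h j⟫ else 0 := by
    intro I
    have hcompl : ∑ i ∈ I, h i = -∑ j ∈ Iᶜ, h j := by
      rw [eq_neg_iff_add_eq_zero, sum_add_sum_compl, hsum]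
    rw [← real_inner_self_eq_norm_sq]
    nth_rewrite 2 [hcompl]
    rw [inner_neg_right, sum_inner]
    simp only [inner_sum, ite_and, sum_ite_irrel, sum_const_zero, ← sum_filter,
      filter_mem_eq_inter, univ_inter, filter_not, ← compl_eq_univ_sdiff]
  have hcount : ∀ i j : ι, (#{I ∈ powersetCard b (univ : Finset ι) | i ∈ I ∧ j ∉ I} : ℝ)
      = c - if i = j then c else 0 := by
    intro i j
    by_cases hij : i = j
    · simp [hij]
    · simp [hij, c, card_filter_powersetCard_mem_notMem hb hij]
  calc ∑ I ∈ powersetCard b (univ : Finset ι), ‖∑ i ∈ I, h i‖ ^ 2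
      = -∑ i, ∑ j, (#{I ∈ powersetCard b (univ : Finset ι) | i ∈ I ∧ j ∉ I} : ℝ) * ⟪h i, h j⟫ := by
        simp_rw [hsplit, sum_neg_distrib, sum_comm (s := powersetCard b univ), ← sum_filter,
          sum_const, nsmul_eq_mul]
    _ = -∑ i, (c * ⟪h i, ∑ j, h j⟫ - c * ⟪h i, h i⟫) := by
        simp_rw [hcount, sub_mul, sum_sub_distrib, ite_mul, zero_mul, sum_ite_eq, mem_univ,
          if_true, inner_sum, mul_sum]
    _ = c * ∑ i, ‖h i‖ ^ 2 := by
        simp [hsum, mul_sum]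

lemma sampling_without_replacement_variance_eq (v : ι → E) {b : ℕ} (hn : 2 ≤ Fintype.card ι)
    (hb : 1 ≤ b) (hbn : b ≤ Fintype.card ι) :
    (∑ I ∈ powersetCard b (univ : Finset ι),
        ‖(b : ℝ)⁻¹ • ∑ i ∈ I, v i - (Fintype.card ι : ℝ)⁻¹ • ∑ i, v i‖ ^ 2)
      / #(powersetCard b (univ : Finset ι))
    = ((Fintype.card ι : ℝ) - b) / (b * ((Fintype.card ι : ℝ) - 1))
      * ((Fintype.card ι : ℝ)⁻¹ * ∑ i, ‖v i - (Fintype.card ι : ℝ)⁻¹ • ∑ j, v j‖ ^ 2) := by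
  set n := Fintype.card ι
  set m := (n : ℝ)⁻¹ • ∑ j, v j
  have hn0 : (n : ℝ) ≠ 0 := by positivity
  have hb0 : (b : ℝ) ≠ 0 := by positivity
  have hcentered : ∑ i, (v i - m) = 0 := by
    rw [sum_sub_distrib, sum_const, card_univ, ← Nat.cast_smul_eq_nsmul ℝ, smul_smul,
      mul_inv_cancel₀ hn0, one_smul, sub_self]
  have hbatch : ∀ I ∈ powersetCard b (univ : Finset ι),
      ‖(b : ℝ)⁻¹ • ∑ i ∈ I, v i - m‖ ^ 2 = (b : ℝ)⁻¹ ^ 2 * ‖∑ i ∈ I, (v i - m)‖ ^ 2 := by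
    intro I hI
    have hsmul : (b : ℝ)⁻¹ • ∑ i ∈ I, v i - m = (b : ℝ)⁻¹ • ∑ i ∈ I, (v i - m) := by
      rw [sum_sub_distrib, sum_const, (mem_powersetCard.mp hI).2, ← Nat.cast_smul_eq_nsmul ℝ,
        smul_sub, smul_smul, inv_mul_cancel₀ hb0, one_smul]
    rw [hsmul, norm_smul, mul_pow, norm_inv, Real.norm_natCast]
  have hcount : ((n - 2).choose (b - 1) : ℝ) * (n * (n - 1)) = n.choose b * (b * (n - b)) := by
    have h := congrArg (Nat.cast (R := ℝ)) (Nat.choose_sub_two_mul_mul hn hb)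
    push_cast [Nat.cast_sub (by omega : 1 ≤ n), Nat.cast_sub hbn] at h
    exact h
  rw [sum_congr rfl hbatch, ← mul_sum, sum_powersetCard_norm_sum_sq hcentered hb,
    card_powersetCard, card_univ, show Fintype.card ι = n from rfl]
  have hC : (n.choose b : ℝ) ≠ 0 := by exact_mod_cast (Nat.choose_pos hbn).ne'
  have hn1 : (n : ℝ) - 1 ≠ 0 := by
    have : (2 : ℝ) ≤ n := by exact_mod_cast hn
    linarith
  field_simp
  linear_combination (∑ i, ‖v i - m‖ ^ 2) * hcount

end Sampling

/-- variance bound for the SVRG gradient estimator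
`∇f̂(x) = (1/b) Σ_{i∈I} (∇f_i(x) − ∇f_i(x̃)) + ∇f(x̃)`, where `I` is a uniformly
random subset of `{1, …, n}` of cardinality `b`:
`E‖∇f̂(x) − ∇f(x)‖² ≤ (4 L_max (n − b)/(b(n − 1))) (D_f(x, x*) + D_f(x̃, x*))`. -/
theorem stmt_3 {d n : ℕ} (hn : 2 ≤ n) (b : ℕ) (hb1 : 1 ≤ b) (hbn : b ≤ n)
    (f : Fin n → EuclideanSpace ℝ (Fin d) → ℝ)
    (f' : Fin n → EuclideanSpace ℝ (Fin d) → EuclideanSpace ℝ (Fin d))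
    (hconv : ∀ i, ConvexOn ℝ Set.univ (f i))
    (hgrad : ∀ i x, HasGradientAt (f i) (f' i x) x)
    (L : Fin n → ℝ)
    (hLip : ∀ i x y, ‖f' i x - f' i y‖ ≤ L i * ‖x - y‖)
    (Lmax : ℝ) (hLmax : IsGreatest (Set.range L) Lmax)
    (x xt xstar : EuclideanSpace ℝ (Fin d)) :
    (∑ I ∈ Finset.powersetCard b (Finset.univ : Finset (Fin n)),
        ‖(((b : ℝ)⁻¹ • ∑ i ∈ I, (f' i x - f' i xt)) + (n : ℝ)⁻¹ • ∑ i, f' i xt)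
          - (n : ℝ)⁻¹ • ∑ i, f' i x‖ ^ 2)
      / ((Finset.powersetCard b (Finset.univ : Finset (Fin n))).card : ℝ)
    ≤ 4 * Lmax * (((n : ℝ) - b) / (b * ((n : ℝ) - 1)))
        * (((((n : ℝ)⁻¹ * ∑ i, f i x) - ((n : ℝ)⁻¹ * ∑ i, f i xstar))
              - ⟪(n : ℝ)⁻¹ • ∑ i, f' i xstar, x - xstar⟫)
           + ((((n : ℝ)⁻¹ * ∑ i, f i xt) - ((n : ℝ)⁻¹ * ∑ i, f i xstar))
              - ⟪(n : ℝ)⁻¹ • ∑ i, f' i xstar, xt - xstar⟫)) := by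
  obtain ⟨v, hv⟩ : ∃ v : Fin n → EuclideanSpace ℝ (Fin d), v = fun i => f' i x - f' i xt :=
    ⟨_, rfl⟩
  have hestimator : ∀ I : Finset (Fin n),
      ((b : ℝ)⁻¹ • ∑ i ∈ I, (f' i x - f' i xt) + (n : ℝ)⁻¹ • ∑ i, f' i xt)
        - (n : ℝ)⁻¹ • ∑ i, f' i x = (b : ℝ)⁻¹ • ∑ i ∈ I, v i - (n : ℝ)⁻¹ • ∑ i, v i := by
    intro I
    simp only [hv, sum_sub_distrib, smul_sub]
    abel
  set κ := ((n : ℝ) - b) / (b * ((n : ℝ) - 1))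
  have hκ : 0 ≤ κ := div_nonneg (sub_nonneg.mpr (by exact_mod_cast hbn))
    (mul_nonneg (by positivity) (sub_nonneg.mpr (by exact_mod_cast (by omega : 1 ≤ n))))
  calc _ = κ * ((n : ℝ)⁻¹ * ∑ i, ‖v i - (n : ℝ)⁻¹ • ∑ j, v j‖ ^ 2) := by
        simp_rw [hestimator]
        simpa using sampling_without_replacement_variance_eq v (by simpa using hn) hb1
          (by simpa using hbn)
    _ ≤ κ * ((n : ℝ)⁻¹ * ∑ i, ‖v i‖ ^ 2) := by
        gcongr _ * (_ * ?_)
        simpa using sum_norm_sub_mean_sq_le v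
    _ ≤ κ * ((n : ℝ)⁻¹ * ∑ i,
          4 * Lmax * (bregmanDiv (f i) (f' i) x xstar + bregmanDiv (f i) (f' i) xt xstar)) := by
        gcongr with i
        exact hv ▸ (hconv i).sq_norm_sub_le_four_mul_bregmanDiv_add (hgrad i)
          (fun u w => (hLip i u w).trans (by gcongr; exact hLmax.2 ⟨i, rfl⟩)) x xt xstar
    _ = 4 * Lmax * κ
          * (bregmanDiv (fun y => (n : ℝ)⁻¹ * ∑ i, f i y) (fun y => (n : ℝ)⁻¹ • ∑ i, f' i y) x xstar
            + bregmanDiv (fun y => (n : ℝ)⁻¹ * ∑ i, f i y) (fun y => (n : ℝ)⁻¹ • ∑ i, f' i y)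
              xt xstar) := by
        rw [bregmanDiv_mul_sum, bregmanDiv_mul_sum, ← mul_add, ← sum_add_distrib, ← mul_sum]
        ring
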